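/- arXiv:1809.06769 — 7 statements merged into one kernel-verified Lean document; each statement's English description precedes it below -/
import Mathlib

section
/- For any prae-dilator T and any Bachmann-Howard system (X, ι_X, L_X), the relation <_{ϑ_T(X)} defined recursively on terms ϑσ (σ ∈ T_X) is antisymmetric: we never have both ϑσ < ϑτ and ϑτ < ϑσ. -/
/-! If `ϑσ < ϑτ` and `ϑτ < ϑσ` with, say, `σ < τ` in `T_X`, then the first relation gives
`ι x < ϑτ` for all `x ∈ supp σ`, while the second gives `ϑτ ≤ ι x` for some such `x`;
equality would give `ϑτ < ϑτ`, which no clause allows since each compares its arguments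
strictly in `T_X`; so `ι x` and `ϑτ` form another cycle. Since
`L ∘ ι = L_X`, the term `ι x` is strictly shorter than `ϑσ`, so such cycles cannot exist
by induction on the total length. -/

/-! Data for a Bachmann-Howard system: `X` is a linear order, `S` is the linear order
`T_X` (the value of a prae-dilator at `X`), whose elements `σ` simultaneously index the
terms `ϑσ` making up the set `ϑ_T(X)`.  So `supp : S → Finset X` is the support function
`supp^T_X`, `ι : X → S` is the function `ι_X : X → ϑ_T(X)` (identifying terms with their
indices), and `L : X → ℕ` is the length function `L_X`. -/
structure BHData (X S : Type) [LinearOrder X] [LinearOrder S] where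
  supp : S → Finset X
  ι : X → S
  L : X → ℕ

variable {X S : Type} [LinearOrder X] [LinearOrder S]

/-- The induced length function `L_{ϑ_T(X)}(ϑσ) = max{L_X(x) | x ∈ supp σ} + 1`
(with the maximum over the empty set being `0`). -/
def BHData.Lv (D : BHData X S) (σ : S) : ℕ := (D.supp σ).sup D.L + 1

/-- `(X, ι, L)` is a Bachmann-Howard system: `L_{ϑ_T(X)} ∘ ι_X = L_X`. -/
def BHData.IsBH (D : BHData X S) : Prop := ∀ x : X, D.Lv (D.ι x) = D.L x

/-- The recursively defined relation `ϑσ <_{ϑ_T(X)} ϑτ`: either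
(i) `σ <_{T_X} τ` and `ι_X(x) < ϑτ` for all `x ∈ supp σ`, or
(ii) `τ <_{T_X} σ` and `ϑσ ≤ ι_X(x)` for some `x ∈ supp τ`
(the clause (ii) is split according to `ϑσ < ι_X(x)` or `ϑσ = ι_X(x)`).
For a Bachmann-Howard system this least fixed point satisfies the defining
recursion, which is well-founded along `Lv`. -/
inductive BHData.lt (D : BHData X S) : S → S → Prop
  | left {σ τ : S} : σ < τ → (∀ x ∈ D.supp σ, D.lt (D.ι x) τ) → D.lt σ τ
  | right_lt {σ τ : S} (x : X) : τ < σ → x ∈ D.supp τ → D.lt σ (D.ι x) → D.lt σ τ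
  | right_eq {σ τ : S} (x : X) : τ < σ → x ∈ D.supp τ → σ = D.ι x → D.lt σ τ

namespace BHData

variable {D : BHData X S} {σ τ : S} {x : X}

theorem Lv_ι_lt_Lv (hD : D.IsBH) (hx : x ∈ D.supp σ) : D.Lv (D.ι x) < D.Lv σ := by
  rw [hD x]
  exact Nat.lt_succ_of_le (Finset.le_sup hx)

theorem lt.ne (h : D.lt σ τ) : σ ≠ τ := by
  cases h <;> first | exact ne_of_lt ‹_› | exact ne_of_gt ‹_›

theorem lt.ι_lt_of_lt (h : D.lt σ τ) (hστ : σ < τ) (hx : x ∈ D.supp σ) :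
    D.lt (D.ι x) τ := by
  cases h with
  | left _ hsupp => exact hsupp x hx
  | right_lt _ hτσ => exact absurd hστ hτσ.asymm
  | right_eq _ hτσ => exact absurd hστ hτσ.asymm

theorem lt.exists_mem_supp_of_gt (h : D.lt σ τ) (hτσ : τ < σ) :
    ∃ x ∈ D.supp τ, D.lt σ (D.ι x) ∨ σ = D.ι x := by
  cases h with
  | left hστ => exact absurd hτσ hστ.asymm
  | right_lt x _ hx h => exact ⟨x, hx, .inl h⟩
  | right_eq x _ hx h => exact ⟨x, hx, .inr h⟩

theorem exists_shorter_cycle_of_lt (hD : D.IsBH) (hστ : σ < τ) (h₁ : D.lt σ τ)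
    (h₂ : D.lt τ σ) :
    ∃ σ' τ', D.lt σ' τ' ∧ D.lt τ' σ' ∧ D.Lv σ' + D.Lv τ' < D.Lv σ + D.Lv τ := by
  obtain ⟨x, hx, hτx | rfl⟩ := h₂.exists_mem_supp_of_gt hστ
  · refine ⟨D.ι x, τ, h₁.ι_lt_of_lt hστ hx, hτx, ?_⟩
    have := Lv_ι_lt_Lv hD hx
    omega
  · exact absurd rfl (h₁.ι_lt_of_lt hστ hx).ne

theorem exists_shorter_cycle (hD : D.IsBH) (h₁ : D.lt σ τ) (h₂ : D.lt τ σ) :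
    ∃ σ' τ', D.lt σ' τ' ∧ D.lt τ' σ' ∧ D.Lv σ' + D.Lv τ' < D.Lv σ + D.Lv τ := by
  rcases lt_or_gt_of_ne h₁.ne with hστ | hτσ
  · exact exists_shorter_cycle_of_lt hD hστ h₁ h₂
  · rw [add_comm]
    exact exists_shorter_cycle_of_lt hD hτσ h₂ h₁

end BHData

/-- Antisymmetry of the collapse order: for a Bachmann-Howard system we never have
both `ϑσ < ϑτ` and `ϑτ < ϑσ`. -/
theorem BHData.lt_antisymm (D : BHData X S) (hD : D.IsBH) :
    ∀ σ τ : S, ¬ (D.lt σ τ ∧ D.lt τ σ) := by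
  intro σ τ
  induction hn : D.Lv σ + D.Lv τ using Nat.strong_induction_on generalizing σ τ with
  | _ n ih =>
    rintro ⟨h₁, h₂⟩
    obtain ⟨σ', τ', h₁', h₂', hshorter⟩ := exists_shorter_cycle hD h₁ h₂
    exact ih _ (hn ▸ hshorter) σ' τ' rfl ⟨h₁', h₂'⟩
end

section
/- For any prae-dilator T and any Bachmann-Howard system (X, ι_X, L_X), the relation <_{ϑ_T(X)} is trichotomous: for all σ, τ ∈ T_X, exactly one of ϑσ < ϑτ, ϑσ = ϑτ, ϑτ < ϑσ holds. -/
variable {X S : Type} [LinearOrder X] [LinearOrder S]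

/-!
Asymmetry and totality of `ϑσ < ϑτ` both follow by induction on `Lv σ + Lv τ`: each clause of
the definition refers only to comparisons of some `ι x`, with `x` in a support, against the other
term, and the Bachmann-Howard condition `Lv (ι x) = L x ≤ max L[supp σ] < Lv σ` makes these
shorter. Two derivations of `ϑσ < ϑτ` and `ϑτ < ϑσ` that use the same clause would contradict the
order of `S`, so one uses clause (i) and the other clause (ii), and these meet at some `ι x`.
-/

namespace BHData

variable (D : BHData X S)

theorem lt_irrefl (σ : S) : ¬ D.lt σ σ := by
  rintro (⟨h, -⟩ | ⟨-, h, -, -⟩ | ⟨-, h, -, -⟩) <;> exact _root_.lt_irrefl σ h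

theorem Lv_ι_lt_of_mem_supp (hD : D.IsBH) {x : X} {σ : S} (hx : x ∈ D.supp σ) :
    D.Lv (D.ι x) < D.Lv σ := by
  rw [hD x]
  exact Nat.lt_succ_of_le (Finset.le_sup hx)

theorem lt_asymm (hD : D.IsBH) {σ τ : S} (hστ : D.lt σ τ) (hτσ : D.lt τ σ) : False := by
  cases hστ with
  | left hlt hsupp =>
    cases hτσ with
    | left hgt _ => exact _root_.lt_asymm hlt hgt
    | right_lt x _ hx hτx =>
      have := D.Lv_ι_lt_of_mem_supp hD hx
      exact lt_asymm hD (hsupp x hx) hτx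
    | right_eq x _ hx hτ => exact D.lt_irrefl τ (hτ ▸ hsupp x hx)
  | right_lt x hgt hx hσx =>
    cases hτσ with
    | left _ hsupp =>
      have := D.Lv_ι_lt_of_mem_supp hD hx
      exact lt_asymm hD hσx (hsupp x hx)
    | right_lt _ hlt _ _ | right_eq _ hlt _ _ => exact _root_.lt_asymm hlt hgt
  | right_eq x hgt hx hσ =>
    cases hτσ with
    | left _ hsupp => exact D.lt_irrefl σ (hσ ▸ hsupp x hx)
    | right_lt _ hlt _ _ | right_eq _ hlt _ _ => exact _root_.lt_asymm hlt hgt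
termination_by D.Lv σ + D.Lv τ

theorem lt_or_lt_of_lt (hD : D.IsBH) {σ τ : S} (hlt : σ < τ) : D.lt σ τ ∨ D.lt τ σ := by
  by_cases hsupp : ∀ x ∈ D.supp σ, D.lt (D.ι x) τ
  · exact .inl (.left hlt hsupp)
  push Not at hsupp
  obtain ⟨x, hx, hxτ⟩ := hsupp
  have := D.Lv_ι_lt_of_mem_supp hD hx
  refine .inr ?_
  rcases _root_.lt_trichotomy (D.ι x) τ with h | h | h
  · exact .right_lt x hlt hx ((lt_or_lt_of_lt hD h).resolve_left hxτ)
  · exact .right_eq x hlt hx h.symm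
  · exact .right_lt x hlt hx ((lt_or_lt_of_lt hD h).resolve_right hxτ)
termination_by D.Lv σ + D.Lv τ

theorem lt_or_lt_of_ne (hD : D.IsBH) {σ τ : S} (hne : σ ≠ τ) : D.lt σ τ ∨ D.lt τ σ := by
  rcases hne.lt_or_gt with h | h
  · exact D.lt_or_lt_of_lt hD h
  · exact (D.lt_or_lt_of_lt hD h).symm

end BHData

/-- Trichotomy for the collapse order of a Bachmann-Howard system: exactly one of
`ϑσ < ϑτ`, `ϑσ = ϑτ`, `ϑτ < ϑσ` holds. -/
theorem BHData.lt_trichotomy (D : BHData X S) (hD : D.IsBH) :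
    ∀ σ τ : S, (D.lt σ τ ∨ σ = τ ∨ D.lt τ σ) ∧
      (D.lt σ τ → σ ≠ τ) ∧ (σ = τ → ¬ D.lt τ σ) ∧ ¬ (D.lt σ τ ∧ D.lt τ σ) := by
  intro σ τ
  refine ⟨?_, fun h hστ => D.lt_irrefl τ (hστ ▸ h), fun hστ => hστ ▸ D.lt_irrefl σ,
    fun ⟨hστ, hτσ⟩ => D.lt_asymm hD hστ hτσ⟩
  by_cases hστ : σ = τ
  · exact .inr (.inl hστ)
  · exact (D.lt_or_lt_of_ne hD hστ).imp_right .inr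
end

section
/- If (X, ι_X, L_X) is a good Bachmann-Howard system for a prae-dilator T (i.e., ι_X : X → ϑ_T(X) is an order embedding), then the triple (ϑ_T(X), ι_{ϑ_T(X)}, L_{ϑ_T(X)}), where ι_{ϑ_T(X)}(ϑσ) := ϑ T_{ι_X}(σ), is again a Bachmann-Howard system: L_{ϑ_T(ϑ_T(X))} ∘ ι_{ϑ_T(X)} = L_{ϑ_T(X)}. -/
/-- A prae-dilator: a functor on (the category of) linear orders with order embeddings
as morphisms, together with a natural support transformation `supp^T : T ⇒ [·]^{<ω}`
such that every `σ ∈ T_X` lies in the range of `T` applied to the inclusion of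
`supp^T_X(σ)` into `X`. -/
structure PraeDilator where
  obj : Type → Type
  ord : (X : Type) → [inst : LinearOrder X] → LinearOrder (obj X)
  map : {X Y : Type} → [instX : LinearOrder X] → [instY : LinearOrder Y] →
    (X ↪o Y) → obj X → obj Y
  supp : {X : Type} → obj X → Finset X
  map_lt : ∀ {X Y : Type} [LinearOrder X] [LinearOrder Y] (f : X ↪o Y) (σ τ : obj X),
    (ord X).lt σ τ ↔ (ord Y).lt (map f σ) (map f τ)
  map_id : ∀ {X : Type} [LinearOrder X] (σ : obj X),
    map (RelEmbedding.refl ((· ≤ ·) : X → X → Prop)) σ = σ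
  map_comp : ∀ {X Y Z : Type} [LinearOrder X] [LinearOrder Y] [LinearOrder Z]
    (f : X ↪o Y) (g : Y ↪o Z) (σ : obj X), map (f.trans g) σ = map g (map f σ)
  supp_natural : ∀ {X Y : Type} [LinearOrder X] [LinearOrder Y] (f : X ↪o Y)
    (σ : obj X) (y : Y), y ∈ supp (map f σ) ↔ ∃ x ∈ supp σ, f x = y
  supp_spec : ∀ {X : Type} [LinearOrder X] (σ : obj X),
    ∃ τ : obj {x : X // x ∈ supp σ}, map (OrderEmbedding.subtype fun x => x ∈ supp σ) τ = σ

theorem PraeDilator.supp_map (T : PraeDilator) {X Y : Type} [LinearOrder X] [LinearOrder Y]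
    (f : X ↪o Y) (σ : T.obj X) :
    T.supp (T.map f σ) = (T.supp σ).image f := by
  ext y
  rw [T.supp_natural, Finset.mem_image]

theorem BHSystem.iterate_general (T : PraeDilator) (X ΘX : Type) [LinearOrder X] [LinearOrder ΘX]
    (θ : T.obj X ≃ ΘX) (e : X ↪o ΘX) (L : X → ℕ)
    (hBH : ∀ x : X, (T.supp (θ.symm (e x))).sup L + 1 = L x) :
    ∀ s : ΘX,
      (T.supp (T.map e (θ.symm s))).sup (fun y : ΘX => (T.supp (θ.symm y)).sup L + 1) + 1
        = (T.supp (θ.symm s)).sup L + 1 := by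
  intro s
  rw [T.supp_map, Finset.sup_image]
  congr 1
  exact Finset.sup_congr rfl fun x _ => hBH x

/-- If `(X, ι_X, L_X)` is a good Bachmann-Howard system for `T` (goodness: `ι_X` is an
order embedding `e : X ↪o ΘX`, where `ΘX` carries the recursively defined collapse order,
realized via the term bijection `θ : T_X ≃ ϑ_T(X)`, `θ σ = ϑσ`), then
`(ϑ_T(X), ι_{ϑ_T(X)}, L_{ϑ_T(X)})` is again a Bachmann-Howard system:
`L_{ϑ_T(ϑ_T(X))} ∘ ι_{ϑ_T(X)} = L_{ϑ_T(X)}`, where `ι_{ϑ_T(X)}(ϑσ) = ϑ T_{ι_X}(σ)`,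
i.e. the term of index `T.map e (θ.symm s)`. -/
theorem BHSystem.iterate (T : PraeDilator) (X ΘX : Type) [LinearOrder X] [LinearOrder ΘX]
    (θ : T.obj X ≃ ΘX) (e : X ↪o ΘX) (L : X → ℕ)
    (hBH : ∀ x : X, (T.supp (θ.symm (e x))).sup L + 1 = L x)
    (horder : ∀ s t : ΘX, s < t ↔
      ((T.ord X).lt (θ.symm s) (θ.symm t) ∧ ∀ x ∈ T.supp (θ.symm s), e x < t) ∨
      ((T.ord X).lt (θ.symm t) (θ.symm s) ∧ ∃ x ∈ T.supp (θ.symm t), s ≤ e x)) :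
    ∀ s : ΘX,
      (T.supp (T.map e (θ.symm s))).sup (fun y : ΘX => (T.supp (θ.symm y)).sup L + 1) + 1
        = (T.supp (θ.symm s)).sup L + 1 :=
  BHSystem.iterate_general T X ΘX θ e L hBH
end

section
/- For every prae-dilator T, the order BH(T) is a Bachmann-Howard fixed point of T: there is a function ϑ : T_{BH(T)} → BH(T) such that (i) σ <_{T_{BH(T)}} τ together with supp^T_{BH(T)}(σ) <^fin_{BH(T)} ϑ(τ) implies ϑ(σ) <_{BH(T)} ϑ(τ), and (ii) supp^T_{BH(T)}(σ) <^fin_{BH(T)} ϑ(σ) for all σ. -/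
attribute [local instance] PraeDilator.ord

namespace PraeDilator

variable (T : PraeDilator) {X Y : Type} [LinearOrder X] [LinearOrder Y]

theorem exists_map_eq_of_supp_subset_range (g : X ↪o Y) (σ : T.obj Y)
    (h : ∀ y ∈ T.supp σ, ∃ x, g x = y) : ∃ α : T.obj X, T.map g α = σ := by
  choose s hs using h
  let s' : {y // y ∈ T.supp σ} ↪o X :=
    OrderEmbedding.ofMapLEIff (fun y => s y.1 y.2) fun a b => by
      rw [← g.le_iff_le, hs, hs, Subtype.coe_le_coe]
  obtain ⟨τ, hτ⟩ := T.supp_spec σ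
  refine ⟨T.map s' τ, ?_⟩
  rw [← T.map_comp]
  convert hτ using 2
  exact RelEmbedding.ext fun y => hs y.1 y.2

end PraeDilator

theorem exists_cocone_eq_of_le {A : ℕ → Type*} {C : Type*} (g : ∀ n, A n → A (n + 1))
    (f : ∀ n, A n → C) (hf : ∀ n a, f (n + 1) (g n a) = f n a) {n m : ℕ} (hnm : n ≤ m)
    (a : A n) : ∃ b : A m, f m b = f n a := by
  induction m, hnm using Nat.le_induction with
  | base => exact ⟨a, rfl⟩
  | succ m _ ih =>
    obtain ⟨b, hb⟩ := ih
    exact ⟨g m b, (hf m b).trans hb⟩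

section BachmannHowardChain

variable {T : PraeDilator} {Xf : ℕ → Type} [∀ n, LinearOrder (Xf n)]
  {θ : ∀ n, T.obj (Xf n) ≃ Xf (n + 1)} {e : ∀ n, Xf n ↪o Xf (n + 1)}

theorem emb_lt_collapse_of_le_mem_supp (hX0 : IsEmpty (Xf 0)) (L : ∀ n, Xf n → ℕ)
    (hLdef : ∀ n (s : Xf (n + 1)), L (n + 1) s = (T.supp ((θ n).symm s)).sup (L n) + 1)
    (hBH : ∀ n (x : Xf n), L (n + 1) (e n x) = L n x)
    (horder : ∀ n (s t : Xf (n + 1)), s < t ↔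
      ((θ n).symm s < (θ n).symm t ∧ ∀ x ∈ T.supp ((θ n).symm s), e n x < t) ∨
      ((θ n).symm t < (θ n).symm s ∧ ∃ x ∈ T.supp ((θ n).symm t), s ≤ e n x))
    (hedef : ∀ n (s : Xf (n + 1)), e (n + 1) s = θ (n + 1) (T.map (e n) ((θ n).symm s)))
    (n : ℕ) (x : Xf n) (α : T.obj (Xf n)) (z : Xf n) (hz : z ∈ T.supp α) (hxz : x ≤ z) :
    e n x < θ n α := by
  obtain ⟨k, hk⟩ : ∃ k, L n x = k := ⟨_, rfl⟩
  induction k using Nat.strong_induction_on generalizing n x α z with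
  | _ k ih =>
  rcases n with _ | m
  · exact hX0.elim x
  set ξ := (θ m).symm x
  have below : ∀ y ∈ T.supp ξ, e m y < x ∧ L (m + 1) (e m y) < k := by
    intro y hy
    have hy_lt : L m y < k := hk ▸ hLdef m x ▸ Nat.lt_succ_of_le (Finset.le_sup hy)
    refine ⟨?_, (hBH m y).symm ▸ hy_lt⟩
    simpa only [ξ, Equiv.apply_symm_apply] using ih _ hy_lt m y ξ y hy le_rfl rfl
  have hξ : (θ (m + 1)).symm (e (m + 1) x) = T.map (e m) ξ := by
    rw [hedef, Equiv.symm_apply_apply]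
  rw [horder, Equiv.symm_apply_apply, hξ]
  rcases lt_trichotomy (T.map (e m) ξ) α with hlt | heq | hgt
  · refine Or.inl ⟨hlt, fun y' hy' => ?_⟩
    obtain ⟨y, hy, rfl⟩ := (T.supp_natural _ _ _).1 hy'
    exact ih _ (below y hy).2 (m + 1) (e m y) α z hz ((below y hy).1.le.trans hxz) rfl
  · rw [← heq] at hz
    obtain ⟨y, hy, rfl⟩ := (T.supp_natural _ _ _).1 hz
    exact absurd (hxz.trans_lt (below y hy).1) (lt_irrefl x)
  · exact Or.inr ⟨hgt, z, hz, (e (m + 1)).le_iff_le.2 hxz⟩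

variable {B : Type} [LinearOrder B] {j : ∀ n, Xf n ↪o B}

theorem exists_map_eq_of_cofinal (hcomm : ∀ n (x : Xf n), j (n + 1) (e n x) = j n x)
    (hcof : ∀ b : B, ∃ n, ∃ x : Xf n, j n x = b) (σ : T.obj B) :
    ∃ n, ∃ α : T.obj (Xf n), T.map (j n) α = σ := by
  choose stage x hx using hcof
  refine ⟨(T.supp σ).sup stage, T.exists_map_eq_of_supp_subset_range _ σ fun b hb => ?_⟩
  obtain ⟨y, hy⟩ := exists_cocone_eq_of_le (fun n => e n) (fun n => j n) hcomm
    (Finset.le_sup hb) (x b)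
  exact ⟨y, hy.trans (hx b)⟩

theorem exists_lift_collapse
    (hedef : ∀ n (s : Xf (n + 1)), e (n + 1) s = θ (n + 1) (T.map (e n) ((θ n).symm s)))
    (hcomm : ∀ n (x : Xf n), j (n + 1) (e n x) = j n x) {n m : ℕ} (hnm : n ≤ m)
    (α : T.obj (Xf n)) : ∃ β : T.obj (Xf m),
      T.map (j m) β = T.map (j n) α ∧ j (m + 1) (θ m β) = j (n + 1) (θ n α) := by
  have hf : ∀ n (β : T.obj (Xf n)),
      (T.map (j (n + 1)) (T.map (e n) β), j (n + 2) (θ (n + 1) (T.map (e n) β))) =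
        (T.map (j n) β, j (n + 1) (θ n β)) := by
    intro n β
    have hej : (e n).trans (j (n + 1)) = j n := RelEmbedding.ext (hcomm n)
    have hθ := hedef n (θ n β)
    rw [Equiv.symm_apply_apply] at hθ
    rw [← T.map_comp, hej, ← hθ, hcomm]
  simpa only [Prod.ext_iff] using exists_cocone_eq_of_le (fun n => T.map (e n))
    (fun n β => (T.map (j n) β, j (n + 1) (θ n β))) hf hnm α

theorem collapse_lt_of_map_lt
    (horder : ∀ n (s t : Xf (n + 1)), s < t ↔
      ((θ n).symm s < (θ n).symm t ∧ ∀ x ∈ T.supp ((θ n).symm s), e n x < t) ∨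
      ((θ n).symm t < (θ n).symm s ∧ ∃ x ∈ T.supp ((θ n).symm t), s ≤ e n x))
    (hcomm : ∀ n (x : Xf n), j (n + 1) (e n x) = j n x) {n : ℕ} {α β : T.obj (Xf n)}
    (hlt : T.map (j n) α < T.map (j n) β)
    (hsupp : ∀ b ∈ T.supp (T.map (j n) α), b < j (n + 1) (θ n β)) :
    j (n + 1) (θ n α) < j (n + 1) (θ n β) := by
  rw [(j _).lt_iff_lt, horder, Equiv.symm_apply_apply, Equiv.symm_apply_apply]
  refine Or.inl ⟨(T.map_lt _ _ _).2 hlt, fun a ha => ?_⟩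
  rw [← (j (n + 1)).lt_iff_lt, hcomm]
  exact hsupp _ ((T.supp_natural _ _ _).2 ⟨a, ha, rfl⟩)

end BachmannHowardChain

/-- The direct limit `BH(T)` (here `B`) of the chain `X_0 = ∅`, `X_{n+1} = ϑ_T(X_n)`
of good Bachmann-Howard systems is a Bachmann-Howard fixed point of `T`: there is a
Bachmann-Howard collapse `ϑ : T_{BH(T)} → BH(T)` satisfying
(i) `σ < τ` and `supp σ <^fin ϑ(τ)` imply `ϑ(σ) < ϑ(τ)`, and (ii) `supp σ <^fin ϑ(σ)`. -/
theorem BH_is_fixed_point (T : PraeDilator) (Xf : ℕ → Type) [∀ n, LinearOrder (Xf n)]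
    (hX0 : IsEmpty (Xf 0))
    (θ : ∀ n, T.obj (Xf n) ≃ Xf (n + 1))
    (e : ∀ n, Xf n ↪o Xf (n + 1))
    (L : ∀ n, Xf n → ℕ)
    (hLdef : ∀ n (s : Xf (n + 1)), L (n + 1) s = (T.supp ((θ n).symm s)).sup (L n) + 1)
    (hBH : ∀ n (x : Xf n), L (n + 1) (e n x) = L n x)
    (horder : ∀ n (s t : Xf (n + 1)), s < t ↔
      ((T.ord (Xf n)).lt ((θ n).symm s) ((θ n).symm t) ∧
        ∀ x ∈ T.supp ((θ n).symm s), e n x < t) ∨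
      ((T.ord (Xf n)).lt ((θ n).symm t) ((θ n).symm s) ∧
        ∃ x ∈ T.supp ((θ n).symm t), s ≤ e n x))
    (hedef : ∀ n (s : Xf (n + 1)), e (n + 1) s = θ (n + 1) (T.map (e n) ((θ n).symm s)))
    (B : Type) [LinearOrder B] (j : ∀ n, Xf n ↪o B)
    (hcomm : ∀ n (x : Xf n), j (n + 1) (e n x) = j n x)
    (hcof : ∀ b : B, ∃ n, ∃ x : Xf n, j n x = b) :
    ∃ ϑ : T.obj B → B,
      (∀ σ τ : T.obj B, (T.ord B).lt σ τ → (∀ x ∈ T.supp σ, x < ϑ τ) → ϑ σ < ϑ τ) ∧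
      (∀ σ : T.obj B, ∀ x ∈ T.supp σ, x < ϑ σ) := by
  choose n α hα using exists_map_eq_of_cofinal hcomm hcof
  refine ⟨fun σ => j (n σ + 1) (θ (n σ) (α σ)), fun σ τ hlt hsupp => ?_, fun σ b hb => ?_⟩
  · obtain ⟨α', hα', hθα'⟩ := exists_lift_collapse hedef hcomm (le_max_left (n σ) (n τ)) (α σ)
    obtain ⟨β', hβ', hθβ'⟩ := exists_lift_collapse hedef hcomm (le_max_right (n σ) (n τ)) (α τ)
    rw [hα] at hα' hβ'
    change j _ _ < j _ _
    rw [← hθα', ← hθβ']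
    exact collapse_lt_of_map_lt horder hcomm (by rwa [hα', hβ']) (by rwa [hα', hθβ'])
  · rw [← hα σ] at hb
    obtain ⟨a, ha, rfl⟩ := (T.supp_natural _ _ _).1 hb
    rw [← hcomm, (j _).lt_iff_lt]
    exact emb_lt_collapse_of_le_mem_supp hX0 L hLdef hBH horder hedef _ a _ a ha le_rfl
end

section
/- Let T be a prae-dilator, Y a Bachmann-Howard fixed point of T with collapse ϑ_Y : T_Y → Y, (X, ι_X, L_X) a good Bachmann-Howard system, and h_X : X → Y a Bachmann-Howard interpretation (an order embedding with h_X^ϑ ∘ ι_X = h_X, where h_X^ϑ(ϑσ) := ϑ_Y(T_{h_X}(σ))). Then h_X^ϑ : ϑ_T(X) → Y is an order embedding. -/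
/-! For `s = ϑσ` and `t = ϑτ` write `h^ϑ s := ϑY (T_h σ)` and `M s := max {L x | x ∈ supp σ}`; goodness of
the system says `M (ι x) < L x ≤ M s` for every `x ∈ supp σ`. One shows `s < t → h^ϑ s < h^ϑ t`
by induction on `M s + M t`, following the two clauses of the collapse order. In the first clause
the support of `T_h σ` is `h[supp σ]`, and each `h x = h^ϑ (ι x)` lies below `h^ϑ t` by the
induction hypothesis, so the first collapse axiom applies. In the second clause `s ≤ ι x` for some
`x ∈ supp τ`, so `h^ϑ s ≤ h^ϑ (ι x) = h x`, and `h x < h^ϑ t` by the second collapse axiom. -/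

namespace PraeDilator

variable (T : PraeDilator) {X Y : Type} [LinearOrder X] [LinearOrder Y]

theorem map_lt_map (f : X ↪o Y) {σ τ : T.obj X} (hστ : (T.ord X).lt σ τ) :
    (T.ord Y).lt (T.map f σ) (T.map f τ) :=
  (T.map_lt f σ τ).mp hστ

theorem mem_supp_map (f : X ↪o Y) {σ : T.obj X} {x : X} (hx : x ∈ T.supp σ) :
    f x ∈ T.supp (T.map f σ) :=
  (T.supp_natural f σ (f x)).mpr ⟨x, hx, rfl⟩

theorem lt_collapse_map_of_mem_supp {ϑY : T.obj Y → Y}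
    (hcol2 : ∀ σ : T.obj Y, ∀ y ∈ T.supp σ, y < ϑY σ)
    (f : X ↪o Y) {σ : T.obj X} {x : X} (hx : x ∈ T.supp σ) : f x < ϑY (T.map f σ) :=
  hcol2 _ _ (T.mem_supp_map f hx)

variable {ΘX : Type} [LinearOrder ΘX] (θ : T.obj X ≃ ΘX)

def collapseExtension (ϑY : T.obj Y → Y) (h : X ↪o Y) (s : ΘX) : Y :=
  ϑY (T.map h (θ.symm s))

def suppHeight (L : X → ℕ) (s : ΘX) : ℕ :=
  (T.supp (θ.symm s)).sup L

theorem suppHeight_lt_of_mem_supp {e : X ↪o ΘX} {L : X → ℕ}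
    (hBH : ∀ x : X, (T.supp (θ.symm (e x))).sup L + 1 = L x)
    {s : ΘX} {x : X} (hx : x ∈ T.supp (θ.symm s)) :
    T.suppHeight θ L (e x) < T.suppHeight θ L s :=
  calc T.suppHeight θ L (e x) < L x := by rw [← hBH x]; exact Nat.lt_succ_self _
    _ ≤ T.suppHeight θ L s := Finset.le_sup hx

theorem collapseExtension_lt_of_lt {e : X ↪o ΘX} {L : X → ℕ}
    (hBH : ∀ x : X, (T.supp (θ.symm (e x))).sup L + 1 = L x)
    (horder : ∀ s t : ΘX, s < t →
      ((T.ord X).lt (θ.symm s) (θ.symm t) ∧ ∀ x ∈ T.supp (θ.symm s), e x < t) ∨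
      ((T.ord X).lt (θ.symm t) (θ.symm s) ∧ ∃ x ∈ T.supp (θ.symm t), s ≤ e x))
    {ϑY : T.obj Y → Y}
    (hcol1 : ∀ σ τ : T.obj Y, (T.ord Y).lt σ τ → (∀ y ∈ T.supp σ, y < ϑY τ) → ϑY σ < ϑY τ)
    (hcol2 : ∀ σ : T.obj Y, ∀ y ∈ T.supp σ, y < ϑY σ)
    {h : X ↪o Y} (hinterp : ∀ x : X, T.collapseExtension θ ϑY h (e x) = h x)
    {s t : ΘX} (hst : s < t)
    (ih : ∀ s' t' : ΘX, T.suppHeight θ L s' + T.suppHeight θ L t' <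
        T.suppHeight θ L s + T.suppHeight θ L t →
      s' < t' → T.collapseExtension θ ϑY h s' < T.collapseExtension θ ϑY h t') :
    T.collapseExtension θ ϑY h s < T.collapseExtension θ ϑY h t := by
  have hheight := fun {s x} (hx : x ∈ T.supp (θ.symm s)) => T.suppHeight_lt_of_mem_supp θ hBH hx
  rcases horder s t hst with ⟨hlt, hsupp⟩ | ⟨-, x, hx, hsx⟩
  · refine hcol1 _ _ (T.map_lt_map h hlt) fun y hy => ?_
    obtain ⟨x, hx, rfl⟩ := (T.supp_natural h _ y).mp hy
    rw [← hinterp x]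
    exact ih (e x) t (by have := hheight hx; omega) (hsupp x hx)
  · have hxt : h x < T.collapseExtension θ ϑY h t := T.lt_collapse_map_of_mem_supp hcol2 h hx
    rcases hsx.eq_or_lt with rfl | hlt
    · rwa [hinterp]
    · refine lt_trans ?_ hxt
      rw [← hinterp x]
      exact ih s (e x) (by have := hheight hx; omega) hlt

end PraeDilator

/-- Let `Y` be a Bachmann-Howard fixed point of `T` with collapse `ϑY`, let
`(X, ι_X, L_X)` be a good Bachmann-Howard system (with `ι_X = e : X ↪o ΘX`, where
`ΘX` carries the collapse order realized via the term bijection `θ`), and let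
`h : X ↪o Y` be a Bachmann-Howard interpretation, i.e. `h^ϑ ∘ ι_X = h` where
`h^ϑ(ϑσ) = ϑY(T_h(σ))`.  Then `h^ϑ : ϑ_T(X) → Y` is an order embedding. -/
theorem BH_interpretation_embedding (T : PraeDilator) (X ΘX Y : Type)
    [LinearOrder X] [LinearOrder ΘX] [LinearOrder Y]
    (θ : T.obj X ≃ ΘX) (e : X ↪o ΘX) (L : X → ℕ)
    (hBH : ∀ x : X, (T.supp (θ.symm (e x))).sup L + 1 = L x)
    (horder : ∀ s t : ΘX, s < t ↔
      ((T.ord X).lt (θ.symm s) (θ.symm t) ∧ ∀ x ∈ T.supp (θ.symm s), e x < t) ∨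
      ((T.ord X).lt (θ.symm t) (θ.symm s) ∧ ∃ x ∈ T.supp (θ.symm t), s ≤ e x))
    (ϑY : T.obj Y → Y)
    (hcol1 : ∀ σ τ : T.obj Y, (T.ord Y).lt σ τ → (∀ y ∈ T.supp σ, y < ϑY τ) → ϑY σ < ϑY τ)
    (hcol2 : ∀ σ : T.obj Y, ∀ y ∈ T.supp σ, y < ϑY σ)
    (h : X ↪o Y)
    (hinterp : ∀ x : X, ϑY (T.map h (θ.symm (e x))) = h x) :
    StrictMono (fun s : ΘX => ϑY (T.map h (θ.symm s))) := by
  set M := T.suppHeight θ L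
  suffices H : ∀ n, ∀ s t : ΘX, M s + M t = n → s < t →
      T.collapseExtension θ ϑY h s < T.collapseExtension θ ϑY h t from
    fun s t => H _ s t rfl
  intro n
  induction n using Nat.strong_induction_on with
  | _ n ih =>
    rintro s t rfl hst
    exact T.collapseExtension_lt_of_lt θ hBH (fun s t => (horder s t).mp) hcol1 hcol2 hinterp
      hst fun s' t' hlt => ih _ hlt s' t' rfl
end

section
/- Under the same assumptions, h_X^ϑ : ϑ_T(X) → Y is itself a Bachmann-Howard interpretation: writing h_X^{ϑ²} := (h_X^ϑ)^ϑ : ϑ_T(ϑ_T(X)) → Y, one has h_X^{ϑ²} ∘ ι_{ϑ_T(X)} = h_X^ϑ. -/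
theorem PraeDilator.map_map_of_trans_eq (T : PraeDilator) {X Y Z : Type}
    [LinearOrder X] [LinearOrder Y] [LinearOrder Z] {f : X ↪o Y} {g : Y ↪o Z} {k : X ↪o Z}
    (hk : f.trans g = k) (σ : T.obj X) : T.map g (T.map f σ) = T.map k σ := by
  rw [← T.map_comp, hk]

theorem BH_interpretation_iterate_general (T : PraeDilator) (X ΘX Y : Type)
    [LinearOrder X] [LinearOrder ΘX] [LinearOrder Y]
    (θ : T.obj X ≃ ΘX) (e : X ↪o ΘX)
    (ϑY : T.obj Y → Y)
    (h : X ↪o Y)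
    (hinterp : ∀ x : X, ϑY (T.map h (θ.symm (e x))) = h x)
    (hθe : ΘX ↪o Y) (hθe_def : ∀ s : ΘX, hθe s = ϑY (T.map h (θ.symm s))) :
    ∀ s : ΘX, ϑY (T.map hθe (T.map e (θ.symm s))) = hθe s := by
  intro s
  have hθe_comp_e : e.trans hθe = h := by
    ext x
    rw [RelEmbedding.trans_apply, hθe_def, hinterp]
  rw [T.map_map_of_trans_eq hθe_comp_e, hθe_def]

/-- Under the same assumptions, `h^ϑ : ϑ_T(X) → Y` (as an order embedding `hθe`) is
itself a Bachmann-Howard interpretation: writing `h^{ϑ²} = (h^ϑ)^ϑ`, one has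
`h^{ϑ²} ∘ ι_{ϑ_T(X)} = h^ϑ`, i.e. `ϑY(T_{h^ϑ}(T_{ι_X}(σ))) = h^ϑ(ϑσ)` for all `σ`. -/
theorem BH_interpretation_iterate (T : PraeDilator) (X ΘX Y : Type)
    [LinearOrder X] [LinearOrder ΘX] [LinearOrder Y]
    (θ : T.obj X ≃ ΘX) (e : X ↪o ΘX) (L : X → ℕ)
    (hBH : ∀ x : X, (T.supp (θ.symm (e x))).sup L + 1 = L x)
    (horder : ∀ s t : ΘX, s < t ↔
      ((T.ord X).lt (θ.symm s) (θ.symm t) ∧ ∀ x ∈ T.supp (θ.symm s), e x < t) ∨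
      ((T.ord X).lt (θ.symm t) (θ.symm s) ∧ ∃ x ∈ T.supp (θ.symm t), s ≤ e x))
    (ϑY : T.obj Y → Y)
    (hcol1 : ∀ σ τ : T.obj Y, (T.ord Y).lt σ τ → (∀ y ∈ T.supp σ, y < ϑY τ) → ϑY σ < ϑY τ)
    (hcol2 : ∀ σ : T.obj Y, ∀ y ∈ T.supp σ, y < ϑY σ)
    (h : X ↪o Y)
    (hinterp : ∀ x : X, ϑY (T.map h (θ.symm (e x))) = h x)
    (hθe : ΘX ↪o Y) (hθe_def : ∀ s : ΘX, hθe s = ϑY (T.map h (θ.symm s))) :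
    ∀ s : ΘX, ϑY (T.map hθe (T.map e (θ.symm s))) = hθe s :=
  BH_interpretation_iterate_general T X ΘX Y θ e ϑY h hinterp hθe hθe_def
end

section
/- For any prae-dilator T, the order BH(T) embeds into every Bachmann-Howard fixed point of T; i.e., BH(T) is the minimal Bachmann-Howard fixed point. Consequently, BH(T) is well-founded if and only if T has some well-founded Bachmann-Howard fixed point. -/
/-
A Bachmann-Howard fixed point `ϑ : T_Y → Y` interprets each stage `X_{n+1} = ϑ_T(X_n)` of the
chain: if `h_n : X_n ↪ Y` is an embedding, then `ϑ σ ↦ ϑ (T(h_n) σ)` is order preserving on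
`X_{n+1}`, by induction on the height of terms, because the order of `X_{n+1}` is defined by
exactly the two clauses that conditions (i) and (ii) guarantee in `Y`. These embeddings are
compatible with the inclusions `X_n ⊆ X_{n+1}`, so they glue to an embedding of the direct
limit `BH(T)`. Conversely `BH(T)` is itself a Bachmann-Howard fixed point, with `ϑ` computed
at a finite stage, so it is well founded iff some Bachmann-Howard fixed point is.
-/

section ChainColimit

variable {A : ℕ → Type*} (a : ∀ n, A n → A (n + 1))

theorem exists_eq_of_compatible {Q : Type*} {q : ∀ n, A n → Q}
    (hq : ∀ n x, q (n + 1) (a n x) = q n x) {m n : ℕ} (h : m ≤ n) (x : A m) :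
    ∃ y : A n, q n y = q m x := by
  induction n, h using Nat.le_induction with
  | base => exact ⟨x, rfl⟩
  | succ n _ ih =>
    obtain ⟨y, hy⟩ := ih
    exact ⟨a n y, (hq n y).trans hy⟩

variable {P : Type*} {p : ∀ n, A n → P}

theorem exists_common_level (hp : ∀ n x, p (n + 1) (a n x) = p n x)
    (hsurj : ∀ b, ∃ n x, p n x = b) (b c : P) :
    ∃ N, ∃ x y : A N, p N x = b ∧ p N y = c := by
  obtain ⟨m, x, rfl⟩ := hsurj b
  obtain ⟨n, y, rfl⟩ := hsurj c
  obtain ⟨x', hx'⟩ := exists_eq_of_compatible a hp (Nat.le_add_right m n) x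
  obtain ⟨y', hy'⟩ := exists_eq_of_compatible a hp (Nat.le_add_left n m) y
  exact ⟨m + n, x', y', hx', hy'⟩

theorem exists_level_forall_mem (hp : ∀ n x, p (n + 1) (a n x) = p n x)
    (hsurj : ∀ b, ∃ n x, p n x = b) (s : Finset P) :
    ∃ N, ∀ b ∈ s, ∃ x : A N, p N x = b := by
  choose n x hx using hsurj
  refine ⟨s.sup n, fun b hb => ?_⟩
  obtain ⟨y, hy⟩ := exists_eq_of_compatible a hp (Finset.le_sup hb) (x b)
  exact ⟨y, hy.trans (hx b)⟩

theorem exists_factor_of_compatible (hp : ∀ n x, p (n + 1) (a n x) = p n x)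
    (hinj : ∀ n, Function.Injective (p n)) (hsurj : ∀ b, ∃ n x, p n x = b)
    {Q : Type*} {q : ∀ n, A n → Q} (hq : ∀ n x, q (n + 1) (a n x) = q n x) :
    ∃ f : P → Q, ∀ n x, f (p n x) = q n x := by
  choose m y hy using hsurj
  refine ⟨fun b => q (m b) (y b), fun n x => ?_⟩
  have hpq : ∀ n x, (p (n + 1) (a n x), q (n + 1) (a n x)) = (p n x, q n x) :=
    fun n x => by rw [hp, hq]
  obtain ⟨x', hx'⟩ := exists_eq_of_compatible a (q := fun n x => (p n x, q n x)) hpq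
    (Nat.le_add_right n (m (p n x))) x
  obtain ⟨y', hy'⟩ := exists_eq_of_compatible a (q := fun n x => (p n x, q n x)) hpq
    (Nat.le_add_left (m (p n x)) n) (y (p n x))
  simp only [Prod.mk.injEq] at hx' hy'
  have hxy : x' = y' := hinj _ (hx'.1.trans ((hy _).symm.trans hy'.1.symm))
  exact hy'.2.symm.trans (hxy ▸ hx'.2)

theorem strictMono_of_factor [∀ n, Preorder (A n)] [Preorder P] {Q : Type*} [Preorder Q]
    (p : ∀ n, A n ↪o P) (hp : ∀ n x, p (n + 1) (a n x) = p n x)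
    (hsurj : ∀ b, ∃ n x, p n x = b) {q : ∀ n, A n → Q} (hq : ∀ n, StrictMono (q n))
    {f : P → Q} (hf : ∀ n x, f (p n x) = q n x) : StrictMono f := by
  intro b c hbc
  obtain ⟨N, x, y, rfl, rfl⟩ := exists_common_level a hp hsurj b c
  rw [hf, hf]
  exact hq N ((p N).lt_iff_lt.mp hbc)

end ChainColimit

attribute [instance] PraeDilator.ord

namespace PraeDilator

variable (T : PraeDilator) {X Y Z : Type} [LinearOrder X] [LinearOrder Y] [LinearOrder Z]

theorem map_strictMono (f : X ↪o Y) : StrictMono (T.map f) :=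
  fun σ τ => (T.map_lt f σ τ).mp

theorem map_map {f : X ↪o Y} {g : Y ↪o Z} {h : X ↪o Z} (hfg : ∀ x, g (f x) = h x)
    (σ : T.obj X) : T.map g (T.map f σ) = T.map h σ := by
  rw [← T.map_comp, show f.trans g = h from RelEmbedding.ext hfg]

theorem exists_map_eq (g : X ↪o Y) (σ : T.obj Y) (h : ∀ y ∈ T.supp σ, ∃ x, g x = y) :
    ∃ τ, T.map g τ = σ := by
  obtain ⟨ρ, hρ⟩ := T.supp_spec σ
  choose k hk using fun y : {y // y ∈ T.supp σ} => h y y.2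
  have hk_mono : StrictMono k := fun y z hyz => g.lt_iff_lt.mp (by rwa [hk, hk])
  exact ⟨T.map (OrderEmbedding.ofStrictMono k hk_mono) ρ, (T.map_map hk ρ).trans hρ⟩

/-- Conditions (i) and (ii) on a collapse `ϑ : T_Y → Y`. -/
structure IsBHCollapse (ϑ : T.obj Y → Y) : Prop where
  lt_of_lt : ∀ σ τ, σ < τ → (∀ x ∈ T.supp σ, x < ϑ τ) → ϑ σ < ϑ τ
  lt_collapse : ∀ σ, ∀ x ∈ T.supp σ, x < ϑ σ

end PraeDilator

/-- The chain `X_0 = ∅`, `X_{n+1} = ϑ_T(X_n)`: `θ n σ` is the term `ϑσ` of `X_{n+1}`, `L` is the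
height of terms and `e n` the inclusion `X_n ⊆ X_{n+1}`. -/
structure BHChain (T : PraeDilator) where
  X : ℕ → Type
  [linearOrder : ∀ n, LinearOrder (X n)]
  θ : ∀ n, T.obj (X n) ≃ X (n + 1)
  e : ∀ n, X n ↪o X (n + 1)
  L : ∀ n, X n → ℕ
  isEmpty_zero : IsEmpty (X 0)
  L_succ : ∀ n s, L (n + 1) s = (T.supp ((θ n).symm s)).sup (L n) + 1
  L_e : ∀ n x, L (n + 1) (e n x) = L n x
  lt_iff : ∀ n (s t : X (n + 1)), s < t ↔
    ((θ n).symm s < (θ n).symm t ∧ ∀ x ∈ T.supp ((θ n).symm s), e n x < t) ∨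
    ((θ n).symm t < (θ n).symm s ∧ ∃ x ∈ T.supp ((θ n).symm t), s ≤ e n x)
  e_succ : ∀ n s, e (n + 1) s = θ (n + 1) (T.map (e n) ((θ n).symm s))

attribute [instance] BHChain.linearOrder

namespace BHChain

variable {T : PraeDilator} (C : BHChain T)

theorem e_succ_θ {n : ℕ} (τ : T.obj (C.X n)) :
    C.e (n + 1) (C.θ n τ) = C.θ (n + 1) (T.map (C.e n) τ) := by
  rw [C.e_succ, Equiv.symm_apply_apply]

theorem θ_symm_e_succ {n : ℕ} (s : C.X (n + 1)) :
    (C.θ (n + 1)).symm (C.e (n + 1) s) = T.map (C.e n) ((C.θ n).symm s) := by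
  rw [C.e_succ, Equiv.symm_apply_apply]

theorem L_lt_of_mem_supp {n : ℕ} {s : C.X (n + 1)} {z : C.X n}
    (hz : z ∈ T.supp ((C.θ n).symm s)) : C.L n z < C.L (n + 1) s := by
  rw [C.L_succ]
  exact Nat.lt_succ_of_le (Finset.le_sup hz)

/-- Condition (ii) along the chain, strengthened to terms below a support element so that the
induction on the height of `x` goes through. -/
theorem e_lt_θ {n : ℕ} {x x' : C.X n} {σ : T.obj (C.X n)} (hx' : x' ∈ T.supp σ)
    (hx : x ≤ x') : C.e n x < C.θ n σ := by
  induction hk : C.L n x using Nat.strong_induction_on generalizing n x x' σ with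
  | _ k ih =>
  cases n with
  | zero => exact C.isEmpty_zero.elim x
  | succ n =>
    have hsupp : ∀ z ∈ T.supp ((C.θ n).symm x), C.e n z < x := fun z hz => by
      simpa using ih _ (hk ▸ C.L_lt_of_mem_supp hz) hz le_rfl rfl
    rcases lt_trichotomy (T.map (C.e n) ((C.θ n).symm x)) σ with hlt | heq | hgt
    · refine (C.lt_iff _ _ _).mpr (Or.inl ⟨by simpa [C.θ_symm_e_succ] using hlt, ?_⟩)
      intro y hy
      rw [C.θ_symm_e_succ] at hy
      obtain ⟨z, hz, rfl⟩ := (T.supp_natural (C.e n) _ y).mp hy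
      exact ih _ (by rw [C.L_e, ← hk]; exact C.L_lt_of_mem_supp hz) hx'
        ((hsupp z hz).le.trans hx) rfl
    · subst heq
      obtain ⟨z, hz, rfl⟩ := (T.supp_natural (C.e n) _ x').mp hx'
      exact absurd (hsupp z hz) (not_lt.mpr hx)
    · refine (C.lt_iff _ _ _).mpr (Or.inr ⟨by simpa [C.θ_symm_e_succ] using hgt, x', ?_, ?_⟩)
      · simpa using hx'
      · exact (C.e (n + 1)).le_iff_le.mpr hx

section Interpretation

variable {Y : Type} [LinearOrder Y] {ϑ : T.obj Y → Y}

def Coherent (ϑ : T.obj Y → Y) {n : ℕ} (f : C.X n ↪o Y) : Prop :=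
  ∀ x, ϑ (T.map f ((C.θ n).symm (C.e n x))) = f x

theorem strictMono_collapse_map (hϑ : T.IsBHCollapse ϑ) {n : ℕ} {f : C.X n ↪o Y}
    (hf : C.Coherent ϑ f) : StrictMono fun s => ϑ (T.map f ((C.θ n).symm s)) := by
  intro s t hst
  induction hk : C.L (n + 1) s + C.L (n + 1) t using Nat.strong_induction_on
    generalizing s t with
  | _ k ih =>
  rcases (C.lt_iff n s t).mp hst with ⟨hlt, hsupp⟩ | ⟨hlt, x, hx, hle⟩
  · refine hϑ.lt_of_lt _ _ (T.map_strictMono f hlt) fun y hy => ?_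
    obtain ⟨x, hx, rfl⟩ := (T.supp_natural f _ y).mp hy
    have hL := C.L_lt_of_mem_supp hx
    rw [← hf x]
    exact ih (C.L (n + 1) (C.e n x) + C.L (n + 1) t) (by rw [C.L_e]; omega) (hsupp x hx) rfl
  · have hfx : f x < ϑ (T.map f ((C.θ n).symm t)) :=
      hϑ.lt_collapse _ _ ((T.supp_natural f _ _).mpr ⟨x, hx, rfl⟩)
    refine lt_of_le_of_lt ?_ hfx
    rw [← hf x]
    rcases hle.eq_or_lt with rfl | hlt'
    · rfl
    · have hL := C.L_lt_of_mem_supp hx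
      exact (ih (C.L (n + 1) s + C.L (n + 1) (C.e n x)) (by rw [C.L_e]; omega) hlt' rfl).le

theorem coherent_collapse_map (hϑ : T.IsBHCollapse ϑ) {n : ℕ} {f : C.X n ↪o Y}
    (hf : C.Coherent ϑ f) :
    C.Coherent ϑ (OrderEmbedding.ofStrictMono _ (C.strictMono_collapse_map hϑ hf)) := by
  intro s
  rw [C.θ_symm_e_succ, T.map_map fun x => hf x]
  rfl

/-- The Bachmann-Howard interpretations `h_{X_0} = ∅`, `h_{X_{n+1}} = h_{X_n}^ϑ`. -/
def interp (hϑ : T.IsBHCollapse ϑ) : ∀ n, {f : C.X n ↪o Y // C.Coherent ϑ f}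
  | 0 => ⟨@OrderEmbedding.ofIsEmpty _ _ _ _ C.isEmpty_zero, fun x => C.isEmpty_zero.elim x⟩
  | n + 1 => ⟨_, C.coherent_collapse_map hϑ (interp hϑ n).2⟩

theorem interp_succ_e (hϑ : T.IsBHCollapse ϑ) {n : ℕ} (x : C.X n) :
    (C.interp hϑ (n + 1)).1 (C.e n x) = (C.interp hϑ n).1 x :=
  (C.interp hϑ n).2 x

end Interpretation

variable {B : Type} [LinearOrder B] (j : ∀ n, C.X n ↪o B)

theorem exists_strictMono_of_isBHCollapse (hcomm : ∀ n x, j (n + 1) (C.e n x) = j n x)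
    (hcof : ∀ b, ∃ n x, j n x = b) {Y : Type} [LinearOrder Y] {ϑ : T.obj Y → Y}
    (hϑ : T.IsBHCollapse ϑ) : ∃ f : B → Y, StrictMono f := by
  obtain ⟨f, hf⟩ := exists_factor_of_compatible (fun n => C.e n) (p := fun n x => j n x) hcomm
    (fun n => (j n).injective) hcof (q := fun n x => (C.interp hϑ n).1 x)
    fun n x => C.interp_succ_e hϑ x
  exact ⟨f, strictMono_of_factor (fun n => C.e n) j hcomm hcof
    (fun n => (C.interp hϑ n).1.strictMono) hf⟩

theorem exists_map_eq_of_cocone (hcomm : ∀ n x, j (n + 1) (C.e n x) = j n x)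
    (hcof : ∀ b, ∃ n x, j n x = b) (σ : T.obj B) : ∃ n τ, T.map (j n) τ = σ := by
  obtain ⟨N, hN⟩ := exists_level_forall_mem (fun n => C.e n) (p := fun n x => j n x) hcomm hcof
    (T.supp σ)
  exact ⟨N, T.exists_map_eq (j N) σ hN⟩

theorem exists_collapse_factor (hcomm : ∀ n x, j (n + 1) (C.e n x) = j n x)
    (hcof : ∀ b, ∃ n x, j n x = b) :
    ∃ ϑ : T.obj B → B, ∀ n τ, ϑ (T.map (j n) τ) = j (n + 1) (C.θ n τ) :=
  exists_factor_of_compatible (fun n => T.map (C.e n)) (fun n τ => T.map_map (hcomm n) τ)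
    (fun n => (T.map_strictMono (j n)).injective) (C.exists_map_eq_of_cocone j hcomm hcof)
    fun n τ => by rw [← C.e_succ_θ, hcomm]

theorem isBHCollapse_of_factor (hcomm : ∀ n x, j (n + 1) (C.e n x) = j n x)
    (hcof : ∀ b, ∃ n x, j n x = b) {ϑ : T.obj B → B}
    (hϑ : ∀ n τ, ϑ (T.map (j n) τ) = j (n + 1) (C.θ n τ)) : T.IsBHCollapse ϑ where
  lt_of_lt σ τ hlt hsupp := by
    obtain ⟨N, σ₀, τ₀, rfl, rfl⟩ := exists_common_level (fun n => T.map (C.e n))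
      (fun n τ => T.map_map (hcomm n) τ) (C.exists_map_eq_of_cocone j hcomm hcof) σ τ
    rw [hϑ] at hsupp ⊢
    rw [hϑ]
    refine (j (N + 1)).strictMono ((C.lt_iff _ _ _).mpr (Or.inl ⟨?_, fun x hx => ?_⟩))
    · simpa using (T.map_strictMono (j N)).lt_iff_lt.mp hlt
    · rw [Equiv.symm_apply_apply] at hx
      rw [← (j (N + 1)).lt_iff_lt, hcomm]
      exact hsupp _ ((T.supp_natural _ _ _).mpr ⟨x, hx, rfl⟩)
  lt_collapse σ x hx := by
    obtain ⟨n, τ, rfl⟩ := C.exists_map_eq_of_cocone j hcomm hcof σ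
    obtain ⟨x₀, hx₀, rfl⟩ := (T.supp_natural _ _ _).mp hx
    rw [hϑ, ← hcomm]
    exact (j (n + 1)).strictMono (C.e_lt_θ hx₀ le_rfl)

theorem exists_isBHCollapse (hcomm : ∀ n x, j (n + 1) (C.e n x) = j n x)
    (hcof : ∀ b, ∃ n x, j n x = b) : ∃ ϑ : T.obj B → B, T.IsBHCollapse ϑ :=
  let ⟨ϑ, hϑ⟩ := C.exists_collapse_factor j hcomm hcof
  ⟨ϑ, C.isBHCollapse_of_factor j hcomm hcof hϑ⟩

end BHChain

/-- `BH(T)` (here `B`, the direct limit of the chain `X_0 = ∅`, `X_{n+1} = ϑ_T(X_n)`)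
embeds into every Bachmann-Howard fixed point of `T`, i.e. it is the minimal
Bachmann-Howard fixed point.  Consequently `BH(T)` is well-founded if and only if
`T` has some well-founded Bachmann-Howard fixed point. -/
theorem BH_minimal (T : PraeDilator) (Xf : ℕ → Type) [∀ n, LinearOrder (Xf n)]
    (hX0 : IsEmpty (Xf 0))
    (θ : ∀ n, T.obj (Xf n) ≃ Xf (n + 1))
    (e : ∀ n, Xf n ↪o Xf (n + 1))
    (L : ∀ n, Xf n → ℕ)
    (hLdef : ∀ n (s : Xf (n + 1)), L (n + 1) s = (T.supp ((θ n).symm s)).sup (L n) + 1)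
    (hBH : ∀ n (x : Xf n), L (n + 1) (e n x) = L n x)
    (horder : ∀ n (s t : Xf (n + 1)), s < t ↔
      ((T.ord (Xf n)).lt ((θ n).symm s) ((θ n).symm t) ∧
        ∀ x ∈ T.supp ((θ n).symm s), e n x < t) ∨
      ((T.ord (Xf n)).lt ((θ n).symm t) ((θ n).symm s) ∧
        ∃ x ∈ T.supp ((θ n).symm t), s ≤ e n x))
    (hedef : ∀ n (s : Xf (n + 1)), e (n + 1) s = θ (n + 1) (T.map (e n) ((θ n).symm s)))
    (B : Type) [LinearOrder B] (j : ∀ n, Xf n ↪o B)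
    (hcomm : ∀ n (x : Xf n), j (n + 1) (e n x) = j n x)
    (hcof : ∀ b : B, ∃ n, ∃ x : Xf n, j n x = b) :
    (∀ (Y : Type) (iY : LinearOrder Y) (ϑY : T.obj Y → Y),
      (∀ σ τ : T.obj Y, (@PraeDilator.ord T Y iY).lt σ τ →
        (∀ x ∈ T.supp σ, iY.lt x (ϑY τ)) → iY.lt (ϑY σ) (ϑY τ)) →
      (∀ σ : T.obj Y, ∀ x ∈ T.supp σ, iY.lt x (ϑY σ)) →
      ∃ f : B → Y, ∀ a b : B, a < b ↔ iY.lt (f a) (f b)) ∧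
    (WellFounded ((· < ·) : B → B → Prop) ↔
      ∃ (Y : Type) (iY : LinearOrder Y) (ϑY : T.obj Y → Y),
        (∀ σ τ : T.obj Y, (@PraeDilator.ord T Y iY).lt σ τ →
          (∀ x ∈ T.supp σ, iY.lt x (ϑY τ)) → iY.lt (ϑY σ) (ϑY τ)) ∧
        (∀ σ : T.obj Y, ∀ x ∈ T.supp σ, iY.lt x (ϑY σ)) ∧
        WellFounded iY.lt) := by
  let C : BHChain T := ⟨Xf, θ, e, L, hX0, hLdef, hBH, horder, hedef⟩
  refine ⟨fun Y iY ϑY h1 h2 => ?_, fun hwf => ?_, fun ⟨Y, iY, ϑY, h1, h2, hwf⟩ => ?_⟩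
  · obtain ⟨f, hf⟩ := C.exists_strictMono_of_isBHCollapse j hcomm hcof (ϑ := ϑY) ⟨h1, h2⟩
    exact ⟨f, fun a b => hf.lt_iff_lt.symm⟩
  · obtain ⟨ϑB, hϑB⟩ := C.exists_isBHCollapse j hcomm hcof
    exact ⟨B, _, ϑB, hϑB.1, hϑB.2, hwf⟩
  · obtain ⟨f, hf⟩ := C.exists_strictMono_of_isBHCollapse j hcomm hcof (ϑ := ϑY) ⟨h1, h2⟩
    exact Subrelation.wf (fun h => hf h) (InvImage.wf f hwf)
end
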